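/- Let x_1, …, x_n be i.i.d. with a density bounded above by u whose support J_0 ⊆ [L_min, L_max] is a union of at most M intervals, L = L_max − L_min, and let c_0 > 0 and ε > 0. Let 𝒱 be the collection of all subsets of ℝ that are unions of at most M intervals each of length at most 2c_0. Then Prob( sup_{V ∈ 𝒱} (1/n)·R_n(V) − 3M·u·2c_0 > ε ) ≤ (L/(2c_0) + M)·exp(−2nε²/(9M²)), where R_n(V) = #{i ≤ n : x_i ∈ V}. -/

import Mathlib

/-!
Cut the line into the cells `[L_min + 2c₀k, L_min + 2c₀(k+1))`; almost surely all sample points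
lie in the `⌊L/(2c₀)⌋ + 1 ≤ L/(2c₀) + M` cells meeting `[L_min, L_max]`. A set of diameter at most
`2c₀` lies in three consecutive cells, so `R_n(V) ≤ 3M · max_k R_n(cell k)` for every `V ∈ 𝒱`.
A cell has probability at most `2c₀u`, so by Hoeffding's inequality its count exceeds
`n(2c₀u + ε/(3M))` with probability at most `exp(-2nε²/(9M²))`; a union bound over the cells
finishes the proof.
-/

open MeasureTheory ProbabilityTheory Filter Set
open scoped Classical

/-- `R_n(V)`: the number of the first `n` observations lying in `V`. -/
noncomputable def countIn {Ω : Type*} (X : ℕ → Ω → ℝ) (ω : Ω) (n : ℕ) (V : Set ℝ) : ℕ :=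
  ((Finset.range n).filter fun i => X i ω ∈ V).card

/-- The collection `𝒱` of subsets of `ℝ` that are unions of at most `M` intervals,
each of length at most `2c₀`. -/
def unionOfShortIntervals (M : ℕ) (c₀ : ℝ) : Set (Set ℝ) :=
  {V | ∃ W : Fin M → Set ℝ,
    (∀ j, (W j).OrdConnected ∧ ∀ y ∈ W j, ∀ z ∈ W j, |y - z| ≤ 2 * c₀) ∧
    V = ⋃ j, W j}

def gridCell (a h : ℝ) (k : ℤ) : Set ℝ := Ico (a + k * h) (a + (k + 1) * h)

section gridCell

variable {a h : ℝ}

lemma mem_gridCell_iff (hh : 0 < h) {x : ℝ} {k : ℤ} : x ∈ gridCell a h k ↔ ⌊(x - a) / h⌋ = k := by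
  rw [Int.floor_eq_iff, le_div_iff₀ hh, div_lt_iff₀ hh, gridCell, mem_Ico]
  constructor <;> rintro ⟨h1, h2⟩ <;> constructor <;> linarith

lemma mem_gridCell_floor (hh : 0 < h) (x : ℝ) : x ∈ gridCell a h ⌊(x - a) / h⌋ :=
  (mem_gridCell_iff hh).2 rfl

lemma measurableSet_gridCell (k : ℤ) : MeasurableSet (gridCell a h k) := measurableSet_Ico

lemma volume_gridCell (k : ℤ) : volume (gridCell a h k) = ENNReal.ofReal h := by
  rw [gridCell, Real.volume_Ico]
  ring_nf

lemma floor_mem_Icc_of_mem_Icc (hh : 0 < h) {b x : ℝ} (hx : x ∈ Icc a b) :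
    ⌊(x - a) / h⌋ ∈ Finset.Icc 0 ⌊(b - a) / h⌋ :=
  Finset.mem_Icc.2 ⟨Int.floor_nonneg.2 (div_nonneg (by linarith [hx.1]) hh.le),
    Int.floor_mono (div_le_div_of_nonneg_right (by linarith [hx.2]) hh.le)⟩

lemma exists_subset_biUnion_gridCell_of_diam_le (hh : 0 < h) {W : Set ℝ}
    (hW : ∀ y ∈ W, ∀ z ∈ W, |y - z| ≤ h) :
    ∃ m : ℤ, W ⊆ ⋃ k ∈ Finset.Icc (m - 1) (m + 1), gridCell a h k := by
  rcases W.eq_empty_or_nonempty with rfl | ⟨z, hz⟩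
  · exact ⟨0, empty_subset _⟩
  refine ⟨⌊(z - a) / h⌋, fun y hy => mem_iUnion₂.2 ⟨_, ?_, mem_gridCell_floor hh y⟩⟩
  have hle : ∀ p q, p - q ≤ h → ⌊(p - a) / h⌋ ≤ ⌊(q - a) / h⌋ + 1 := fun p q hpq => by
    rw [← Int.floor_add_one]
    exact Int.floor_mono (by rw [div_add_one hh.ne', div_le_div_iff_of_pos_right hh]; linarith)
  have hyz := abs_le.1 (hW y hy z hz)
  have h1 := hle y z (by linarith)
  have h2 := hle z y (by linarith)
  rw [Finset.mem_Icc]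
  constructor <;> linarith

end gridCell

lemma natCast_card_Icc_floor_le {x : ℝ} (hx : 0 ≤ x) : ((Finset.Icc 0 ⌊x⌋).card : ℝ) ≤ x + 1 := by
  rw [Int.card_Icc, sub_zero]
  have hcast : ((⌊x⌋ + 1).toNat : ℝ) = ⌊x⌋ + 1 := by
    exact_mod_cast Int.toNat_of_nonneg (by positivity)
  rw [hcast]
  linarith [Int.floor_le x]

section countIn

variable {Ω : Type*} (X : ℕ → Ω → ℝ) (ω : Ω) (n : ℕ)

lemma countIn_mono {V W : Set ℝ} (hVW : V ⊆ W) : countIn X ω n V ≤ countIn X ω n W :=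
  Finset.card_le_card (Finset.monotone_filter_right _ fun _ _ hx => hVW hx)

lemma countIn_biUnion_le {ι : Type*} (s : Finset ι) (W : ι → Set ℝ) :
    countIn X ω n (⋃ k ∈ s, W k) ≤ ∑ k ∈ s, countIn X ω n (W k) := by
  refine (Finset.card_le_card fun i hi => ?_).trans Finset.card_biUnion_le
  obtain ⟨hi, hmem⟩ := Finset.mem_filter.1 hi
  obtain ⟨k, hk, hik⟩ := mem_iUnion₂.1 hmem
  exact Finset.mem_biUnion.2 ⟨k, hk, Finset.mem_filter.2 ⟨hi, hik⟩⟩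

lemma countIn_eq_sum_indicator (s : Set ℝ) :
    (countIn X ω n s : ℝ) = ∑ i ∈ Finset.range n, s.indicator 1 (X i ω) := by
  simp only [countIn, Finset.card_filter, Nat.cast_sum, Nat.cast_ite, Nat.cast_one,
    Nat.cast_zero, Set.indicator_apply, Pi.one_apply]

variable {X ω n}

lemma countIn_le_three_mul_of_diam_le {a h K : ℝ} (hh : 0 < h)
    (hK : ∀ k : ℤ, (countIn X ω n (gridCell a h k) : ℝ) ≤ K) {W : Set ℝ}
    (hW : ∀ y ∈ W, ∀ z ∈ W, |y - z| ≤ h) : (countIn X ω n W : ℝ) ≤ 3 * K := by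
  obtain ⟨m, hm⟩ := exists_subset_biUnion_gridCell_of_diam_le (a := a) hh hW
  calc (countIn X ω n W : ℝ)
      ≤ ∑ k ∈ Finset.Icc (m - 1) (m + 1), (countIn X ω n (gridCell a h k) : ℝ) := by
        exact_mod_cast (countIn_mono X ω n hm).trans (countIn_biUnion_le X ω n _ _)
    _ ≤ ∑ _k ∈ Finset.Icc (m - 1) (m + 1), K := Finset.sum_le_sum fun k _ => hK k
    _ = 3 * K := by simp [Int.card_Icc, show m + 1 + 1 - (m - 1) = 3 by ring]

lemma countIn_le_of_mem_unionOfShortIntervals {a c₀ K : ℝ} {M : ℕ} (hc₀ : 0 < c₀)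
    (hK : ∀ k : ℤ, (countIn X ω n (gridCell a (2 * c₀) k) : ℝ) ≤ K) {V : Set ℝ}
    (hV : V ∈ unionOfShortIntervals M c₀) : (countIn X ω n V : ℝ) ≤ 3 * M * K := by
  obtain ⟨W, hW, rfl⟩ := hV
  calc (countIn X ω n (⋃ j, W j) : ℝ) ≤ ∑ j, (countIn X ω n (W j) : ℝ) := by
        exact_mod_cast (by simpa using countIn_biUnion_le X ω n Finset.univ W)
    _ ≤ ∑ _j : Fin M, 3 * K :=
        Finset.sum_le_sum fun j _ => countIn_le_three_mul_of_diam_le (by positivity) hK (hW j).2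
    _ = 3 * M * K := by
        rw [Finset.sum_const, Finset.card_univ, Fintype.card_fin, nsmul_eq_mul]
        ring

lemma countIn_gridCell_eq_zero_of_notMem {a b h : ℝ} (hh : 0 < h) (hx : ∀ i, X i ω ∈ Icc a b)
    {k : ℤ} (hk : k ∉ Finset.Icc 0 ⌊(b - a) / h⌋) : countIn X ω n (gridCell a h k) = 0 :=
  Finset.card_eq_zero.2 <| Finset.filter_eq_empty_iff.2 fun i _ hi =>
    hk (((mem_gridCell_iff hh).1 hi) ▸ floor_mem_Icc_of_mem_Icc hh (hx i))

lemma sSup_countIn_div_le {M : ℕ} {a b c₀ K : ℝ} (hc₀ : 0 < c₀) (hK : 0 ≤ K)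
    (hx : ∀ i, X i ω ∈ Icc a b)
    (hcells : ∀ k ∈ Finset.Icc 0 ⌊(b - a) / (2 * c₀)⌋,
      (countIn X ω n (gridCell a (2 * c₀) k) : ℝ) ≤ n * K) :
    sSup {y : ℝ | ∃ V ∈ unionOfShortIntervals M c₀, y = (countIn X ω n V : ℝ) / n}
      ≤ 3 * M * K := by
  have hall : ∀ k : ℤ, (countIn X ω n (gridCell a (2 * c₀) k) : ℝ) ≤ n * K := fun k => by
    by_cases hk : k ∈ Finset.Icc 0 ⌊(b - a) / (2 * c₀)⌋
    · exact hcells k hk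
    · rw [countIn_gridCell_eq_zero_of_notMem (by positivity) hx hk, Nat.cast_zero]
      positivity
  refine Real.sSup_le ?_ (by positivity)
  rintro _ ⟨V, hV, rfl⟩
  refine div_le_of_le_mul₀ n.cast_nonneg (by positivity) ?_
  linarith [countIn_le_of_mem_unionOfShortIntervals hc₀ hall hV]

end countIn

lemma withDensity_ofReal_le_mul {α : Type*} [MeasurableSpace α] {μ : Measure α} {f : α → ℝ}
    {u : ℝ} (hf : ∀ x, f x ≤ u) {s : Set α} (hs : MeasurableSet s) :
    μ.withDensity (fun x => ENNReal.ofReal (f x)) s ≤ ENNReal.ofReal u * μ s := by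
  rw [withDensity_apply _ hs, ← setLIntegral_const]
  exact lintegral_mono fun x => ENNReal.ofReal_le_ofReal (hf x)

lemma withDensity_ofReal_compl_eq_zero {α : Type*} [MeasurableSpace α] {μ : Measure α}
    {f : α → ℝ} {S : Set α} (hS : MeasurableSet S) (hf : Function.support f ⊆ S) :
    μ.withDensity (fun x => ENNReal.ofReal (f x)) Sᶜ = 0 := by
  rw [withDensity_apply _ hS.compl]
  refine setLIntegral_eq_zero hS.compl fun x hx => ?_
  simp [Function.notMem_support.1 fun h => hx (hf h)]

lemma measureReal_countIn_ge_le {Ω : Type*} [MeasurableSpace Ω] {P : Measure Ω}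
    [IsProbabilityMeasure P] {X : ℕ → Ω → ℝ} (hX : ∀ i, Measurable (X i))
    (hindep : iIndepFun X P) {s : Set ℝ} (hs : MeasurableSet s) {p t : ℝ}
    (hp : ∀ i, P.real (X i ⁻¹' s) ≤ p) (ht : 0 ≤ t) (n : ℕ) :
    P.real {ω | n * (p + t) ≤ countIn X ω n s} ≤ Real.exp (-2 * n * t ^ 2) := by
  set Y : ℕ → Ω → ℝ := fun i ω => s.indicator 1 (X i ω)
  have hsubG : ∀ i, HasSubgaussianMGF (fun ω => Y i ω - P.real (X i ⁻¹' s))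
      ((‖(1 : ℝ) - 0‖₊ / 2) ^ 2) P := fun i => by
    rw [← integral_indicator_one (hX i hs)]
    exact hasSubgaussianMGF_of_mem_Icc ((measurable_const.indicator hs).comp (hX i)).aemeasurable
      (ae_of_all _ fun ω => by by_cases h : X i ω ∈ s <;> simp [Y, h])
  have hindep' : iIndepFun (fun i ω => Y i ω - P.real (X i ⁻¹' s)) P :=
    hindep.comp (fun i y => s.indicator 1 y - P.real (X i ⁻¹' s))
      fun i => (measurable_const.indicator hs).sub_const _
  have hoeff := HasSubgaussianMGF.measure_sum_range_ge_le_of_iIndepFun hindep'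
    (n := n) (fun i _ => hsubG i) (mul_nonneg n.cast_nonneg ht)
  refine (measureReal_mono fun ω hω => ?_).trans (hoeff.trans_eq ?_)
  · simp only [Set.mem_ofPred_eq, countIn_eq_sum_indicator, Finset.sum_sub_distrib] at hω ⊢
    have := Finset.sum_le_sum fun i (_ : i ∈ Finset.range n) => hp i
    simp only [Finset.sum_const, Finset.card_range, nsmul_eq_mul] at this
    linarith
  · rcases n.eq_zero_or_pos with rfl | hn
    · simp
    · congr 1
      norm_num
      field_simp
      ring

section law

variable {Ω : Type*} [MeasurableSpace Ω] {P : Measure Ω} {X : ℕ → Ω → ℝ} {f : ℝ → ℝ}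

lemma ae_forall_mem_of_map_eq_withDensity (hX : ∀ i, Measurable (X i))
    (hlaw : ∀ i, P.map (X i) = volume.withDensity fun x => ENNReal.ofReal (f x))
    {S : Set ℝ} (hS : MeasurableSet S) (hf : Function.support f ⊆ S) :
    ∀ᵐ ω ∂P, ∀ i, X i ω ∈ S :=
  ae_all_iff.2 fun i => by
    change P (X i ⁻¹' Sᶜ) = 0
    rw [← Measure.map_apply (hX i) hS.compl, hlaw i]
    exact withDensity_ofReal_compl_eq_zero hS hf

lemma measureReal_preimage_gridCell_le [IsFiniteMeasure P] (hX : ∀ i, Measurable (X i))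
    (hlaw : ∀ i, P.map (X i) = volume.withDensity fun x => ENNReal.ofReal (f x))
    {u : ℝ} (hu : 0 ≤ u) (hf : ∀ x, f x ≤ u) {a h : ℝ} (hh : 0 < h) (i : ℕ) (k : ℤ) :
    P.real (X i ⁻¹' gridCell a h k) ≤ u * h := by
  rw [measureReal_def, ← Measure.map_apply (hX i) (measurableSet_gridCell k), hlaw i]
  refine ENNReal.toReal_le_of_le_ofReal (by positivity) ?_
  calc _ ≤ ENNReal.ofReal u * volume (gridCell a h k) :=
        withDensity_ofReal_le_mul hf (measurableSet_gridCell k)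
    _ = ENNReal.ofReal (u * h) := by rw [volume_gridCell, ENNReal.ofReal_mul hu]

lemma measure_countIn_gridCell_ge_le [IsProbabilityMeasure P] (hX : ∀ i, Measurable (X i))
    (hindep : iIndepFun X P)
    (hlaw : ∀ i, P.map (X i) = volume.withDensity fun x => ENNReal.ofReal (f x))
    {u : ℝ} (hu : 0 ≤ u) (hf : ∀ x, f x ≤ u) {a h t : ℝ} (hh : 0 < h) (ht : 0 ≤ t) (n : ℕ)
    (k : ℤ) :
    P {ω | n * (u * h + t) ≤ countIn X ω n (gridCell a h k)}
      ≤ ENNReal.ofReal (Real.exp (-2 * n * t ^ 2)) := by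
  rw [← ofReal_measureReal]
  exact ENNReal.ofReal_le_ofReal <| measureReal_countIn_ge_le hX hindep
    (measurableSet_gridCell k) (measureReal_preimage_gridCell_le hX hlaw hu hf hh · k) ht n

end law

theorem prob_sup_countIn_unionOfShortIntervals_le_general
    (M : ℕ) (hM : 0 < M) (Lmin Lmax L : ℝ) (hL : L = Lmax - Lmin)
    (u : ℝ) (f₀ : ℝ → ℝ) (hf₀nn : ∀ x, 0 ≤ f₀ x)
    (hf₀u : ∀ x, f₀ x ≤ u)
    (J₀ : Fin M → Set ℝ)
    (hsupp : Function.support f₀ ⊆ ⋃ j, J₀ j)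
    (hsuppIcc : (⋃ j, J₀ j) ⊆ Set.Icc Lmin Lmax)
    {Ω : Type*} [MeasurableSpace Ω] (P : Measure Ω) [IsProbabilityMeasure P]
    (n : ℕ) (X : ℕ → Ω → ℝ) (hX : ∀ i, Measurable (X i))
    (hindep : iIndepFun X P)
    (hlaw : ∀ i, Measure.map (X i) P
      = volume.withDensity fun x => ENNReal.ofReal (f₀ x))
    (c₀ ε : ℝ) (hc₀ : 0 < c₀) (hε : 0 < ε) :
    P {ω | ε < sSup {y : ℝ | ∃ V ∈ unionOfShortIntervals M c₀,
            y = (countIn X ω n V : ℝ) / n}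
          - 3 * M * u * (2 * c₀)}
      ≤ ENNReal.ofReal ((L / (2 * c₀) + M) *
          Real.exp (-2 * n * ε ^ 2 / (9 * M ^ 2))) := by
  subst hL
  have hu : 0 ≤ u := (hf₀nn 0).trans (hf₀u 0)
  have hM' : (1 : ℝ) ≤ M := by exact_mod_cast hM
  have hG := ae_forall_mem_of_map_eq_withDensity hX hlaw measurableSet_Icc (hsupp.trans hsuppIcc)
  have hL : 0 ≤ Lmax - Lmin := by
    obtain ⟨ω, hω⟩ := hG.exists
    linarith [(hω 0).1, (hω 0).2]
  have hδ : 3 * M * (ε / (3 * M)) = ε := by field_simp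
  have hexp : -2 * n * (ε / (3 * M)) ^ 2 = -2 * n * ε ^ 2 / (9 * M ^ 2) := by field_simp; ring
  set cells := Finset.Icc 0 ⌊(Lmax - Lmin) / (2 * c₀)⌋
  set A : ℤ → Set Ω := fun k =>
    {ω | n * (u * (2 * c₀) + ε / (3 * M)) ≤ countIn X ω n (gridCell Lmin (2 * c₀) k)}
  calc _ ≤ P (⋃ k ∈ cells, A k) := by
        refine measure_mono_ae (hG.mono fun ω hω hbad => mem_iUnion₂.2 ?_)
        by_contra! hgood
        simp only [A, Set.mem_ofPred_eq, not_le] at hgood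
        have hsSup :=
          sSup_countIn_div_le (M := M) hc₀ (by positivity) hω fun k hk => (hgood k hk).le
        simp only [Set.ofPred] at hbad hsSup
        linarith
    _ ≤ ∑ k ∈ cells, P (A k) := measure_biUnion_finset_le _ _
    _ ≤ ∑ k ∈ cells, ENNReal.ofReal (Real.exp (-2 * n * ε ^ 2 / (9 * M ^ 2))) :=
        Finset.sum_le_sum fun k _ => hexp ▸ measure_countIn_gridCell_ge_le hX hindep hlaw hu hf₀u
          (by positivity) (by positivity) n k
    _ = ENNReal.ofReal (cells.card * Real.exp (-2 * n * ε ^ 2 / (9 * M ^ 2))) := by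
        rw [Finset.sum_const, nsmul_eq_mul, ENNReal.ofReal_mul (by positivity),
          ENNReal.ofReal_natCast]
    _ ≤ _ := ENNReal.ofReal_le_ofReal <| mul_le_mul_of_nonneg_right
      ((natCast_card_Icc_floor_le (by positivity)).trans (by linarith)) (Real.exp_nonneg _)

/-- **Uniform covering bound.** If `x_1, …, x_n` are i.i.d. with density at most `u`
supported on a union of at most `M` intervals inside `[L_min, L_max]`, then
`Prob( sup_{V ∈ 𝒱} (1/n) R_n(V) − 3M·u·2c₀ > ε ) ≤ (L/(2c₀) + M)·exp(−2nε²/(9M²))`. -/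
theorem prob_sup_countIn_unionOfShortIntervals_le
    (M : ℕ) (hM : 0 < M) (Lmin Lmax L : ℝ) (hL : L = Lmax - Lmin)
    (u : ℝ) (f₀ : ℝ → ℝ) (hf₀meas : Measurable f₀) (hf₀nn : ∀ x, 0 ≤ f₀ x)
    (hf₀u : ∀ x, f₀ x ≤ u)
    (J₀ : Fin M → Set ℝ) (hJ₀ : ∀ j, (J₀ j).OrdConnected)
    (hsupp : Function.support f₀ ⊆ ⋃ j, J₀ j)
    (hsuppIcc : (⋃ j, J₀ j) ⊆ Set.Icc Lmin Lmax)
    {Ω : Type*} [MeasurableSpace Ω] (P : Measure Ω) [IsProbabilityMeasure P]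
    (n : ℕ) (X : ℕ → Ω → ℝ) (hX : ∀ i, Measurable (X i))
    (hindep : iIndepFun X P)
    (hlaw : ∀ i, Measure.map (X i) P
      = volume.withDensity fun x => ENNReal.ofReal (f₀ x))
    (c₀ ε : ℝ) (hc₀ : 0 < c₀) (hε : 0 < ε) :
    P {ω | ε < sSup {y : ℝ | ∃ V ∈ unionOfShortIntervals M c₀,
            y = (countIn X ω n V : ℝ) / n}
          - 3 * M * u * (2 * c₀)}
      ≤ ENNReal.ofReal ((L / (2 * c₀) + M) *
          Real.exp (-2 * n * ε ^ 2 / (9 * M ^ 2))) :=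
  prob_sup_countIn_unionOfShortIntervals_le_general M hM Lmin Lmax L hL u f₀ hf₀nn hf₀u J₀ hsupp
    hsuppIcc P n X hX hindep hlaw c₀ ε hc₀ hε
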